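/- Separation of DTM values (Proposition 3.6, unweighted case): let P = (1−ε)P₀ + εP₁ on ℝ^d with ε ∈ [0,1), suppose dist(S₀, S₁) ≥ η where S₀, S₁ are the supports of P₀, P₁, and let m ∈ (ε, 1), q ≥ 1, h > 0. Suppose x ∈ S₀ satisfies the (a(x), b)-condition P₀(B(x,r)) ≥ min{1, a(x) r^b} with a(x) > (m/(1−ε)) · ((b+q)/b · ((m−ε)/m · η^q − h))^{−b/q}, where (m−ε)/m · η^q − h > 0 and m ≤ 1−ε. Then d_{P,m,q}(x)^q + h < inf_{y ∈ S₁} d_{P,m,q}(y)^q, where d_{P,m,q}(z)^q = (1/m)∫₀^m r_{P,t}(z)^q dt. -/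

import Mathlib

/-!
On the support of `P₁` a ball of radius `r < η` misses `S₀`, so it carries `P`-mass at most `ε`;
hence `r_{P,t}(y) ≥ η` for every level `t > ε`, and averaging over `t ∈ (0, m)` gives
`d_{P,m,q}(y)^q ≥ (m - ε)/m · η^q`. At `x` the `(a, b)`-condition gives
`P(B(x, r)) ≥ min (1 - ε) (a (1 - ε) r^b)`, so `r_{P,t}(x) ≤ (t / (a (1 - ε)))^{1/b}` for `t ≤ m`, and
integrating gives `d_{P,m,q}(x)^q ≤ b/(b+q) · (m / (a (1 - ε)))^{q/b}`. The lower bound on `a` is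
exactly what makes this smaller than `(m - ε)/m · η^q - h`.
-/

open MeasureTheory Metric Set

noncomputable def rad {d : ℕ} (P : Measure (EuclideanSpace ℝ (Fin d))) (p : ℝ)
    (x : EuclideanSpace ℝ (Fin d)) : ℝ :=
  sInf {r : ℝ | 0 < r ∧ p ≤ (P (closedBall x r)).toReal}

section Mixture

variable {α : Type*} [MeasurableSpace α] (μ ν : Measure α) {ε : ℝ}

noncomputable def mixture (ε : ℝ) (μ ν : Measure α) : Measure α :=
  ENNReal.ofReal (1 - ε) • μ + ENNReal.ofReal ε • ν

lemma mixture_apply_toReal [IsFiniteMeasure μ] [IsFiniteMeasure ν] (hε₀ : 0 ≤ ε) (hε₁ : ε ≤ 1)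
    (s : Set α) :
    (mixture ε μ ν s).toReal = (1 - ε) * (μ s).toReal + ε * (ν s).toReal := by
  simp only [mixture, Measure.add_apply, Measure.smul_apply, smul_eq_mul]
  rw [ENNReal.toReal_add (by finiteness) (by finiteness), ENNReal.toReal_mul, ENNReal.toReal_mul,
    ENNReal.toReal_ofReal (by linarith), ENNReal.toReal_ofReal hε₀]

lemma isProbabilityMeasure_mixture [IsProbabilityMeasure μ] [IsProbabilityMeasure ν]
    (hε₀ : 0 ≤ ε) (hε₁ : ε ≤ 1) : IsProbabilityMeasure (mixture ε μ ν) := by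
  constructor
  simp only [mixture, Measure.add_apply, Measure.smul_apply, measure_univ, smul_eq_mul, mul_one]
  rw [← ENNReal.ofReal_add (by linarith) hε₀]
  simp

lemma mul_toReal_le_mixture_apply_toReal [IsFiniteMeasure μ] [IsFiniteMeasure ν] (hε₀ : 0 ≤ ε)
    (hε₁ : ε ≤ 1) (s : Set α) : (1 - ε) * (μ s).toReal ≤ (mixture ε μ ν s).toReal := by
  rw [mixture_apply_toReal μ ν hε₀ hε₁]
  exact le_add_of_nonneg_right (by positivity)

lemma mixture_apply_toReal_le_of_null [IsFiniteMeasure μ] [IsProbabilityMeasure ν] (hε₀ : 0 ≤ ε)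
    (hε₁ : ε ≤ 1) {s : Set α} (hs : μ s = 0) : (mixture ε μ ν s).toReal ≤ ε := by
  rw [mixture_apply_toReal μ ν hε₀ hε₁, hs, ENNReal.toReal_zero, mul_zero, zero_add]
  exact mul_le_of_le_one_right hε₀ measureReal_le_one

end Mixture

lemma integral_div_rpow {m c p : ℝ} (hm : 0 ≤ m) (hc : 0 < c) (hp : 0 ≤ p) :
    ∫ t in (0:ℝ)..m, (t / c) ^ p = m * (m / c) ^ p / (p + 1) := by
  rw [intervalIntegral.integral_comp_div (fun t => t ^ p) hc.ne', zero_div,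
    integral_rpow (Or.inl (by linarith)), Real.zero_rpow (by linarith), sub_zero, smul_eq_mul,
    Real.rpow_add_one' (div_nonneg hm hc.le) (by linarith)]
  field_simp

lemma mul_rpow_div_lt_of_mul_rpow_neg_lt {m c D b q : ℝ} (hm : 0 ≤ m) (hc : 0 < c) (hD : 0 < D)
    (hb : 0 < b) (hq : 0 < q) (h : m * ((b + q) / b * D) ^ (-(b / q)) < c) :
    b / (b + q) * (m / c) ^ (q / b) < D := by
  have hpow : (m / c) ^ (q / b) < (b + q) / b * D := by
    rw [← Real.lt_rpow_inv_iff_of_pos (by positivity) (by positivity) (by positivity), inv_div,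
      div_lt_iff₀ hc]
    rw [Real.rpow_neg (by positivity), ← div_eq_mul_inv, div_lt_iff₀ (by positivity)] at h
    linarith
  calc b / (b + q) * (m / c) ^ (q / b) < b / (b + q) * ((b + q) / b * D) := by gcongr
    _ = D := by field_simp

section Rad

variable {d : ℕ} {P : Measure (EuclideanSpace ℝ (Fin d))} {x : EuclideanSpace ℝ (Fin d)}
  {t t' r : ℝ}

lemma rad_nonneg (P : Measure (EuclideanSpace ℝ (Fin d))) (t : ℝ) (x : EuclideanSpace ℝ (Fin d)) :
    0 ≤ rad P t x :=
  Real.sInf_nonneg fun _ hr => hr.1.le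

lemma rad_le (hr : 0 < r) (h : t ≤ (P (closedBall x r)).toReal) : rad P t x ≤ r :=
  csInf_le ⟨0, fun _ hs => hs.1.le⟩ ⟨hr, h⟩

lemma exists_pos_le_measure_closedBall [IsProbabilityMeasure P] (ht : t < 1) :
    ∃ r, 0 < r ∧ t ≤ (P (closedBall x r)).toReal := by
  have hlim : Filter.Tendsto (fun n : ℕ => P (closedBall x n)) Filter.atTop (nhds 1) := by
    have h := tendsto_measure_iUnion_atTop (μ := P) (s := fun n : ℕ => closedBall x n)
      fun i j hij => closedBall_subset_closedBall (Nat.cast_le.2 hij)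
    rwa [iUnion_closedBall_nat, measure_univ] at h
  obtain ⟨n, hn⟩ := (hlim.eventually (Ioi_mem_nhds (ENNReal.ofReal_lt_one.2 ht))).exists
  refine ⟨n + 1, by positivity, (ENNReal.ofReal_le_iff_le_toReal (measure_ne_top _ _)).1 ?_⟩
  exact hn.le.trans (measure_mono (closedBall_subset_closedBall (by linarith)))

lemma rad_mono [IsProbabilityMeasure P] (htt' : t ≤ t') (ht' : t' < 1) :
    rad P t x ≤ rad P t' x :=
  csInf_le_csInf ⟨0, fun _ hs => hs.1.le⟩ (exists_pos_le_measure_closedBall ht')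
    fun _ hr => ⟨hr.1, htt'.trans hr.2⟩

lemma le_rad [IsProbabilityMeasure P] (ht : t < 1) {η : ℝ}
    (h : ∀ r, 0 < r → r < η → (P (closedBall x r)).toReal < t) : η ≤ rad P t x :=
  le_csInf (exists_pos_le_measure_closedBall ht) fun r hr =>
    not_lt.1 fun hrη => (h r hr.1 hrη).not_ge hr.2

lemma intervalIntegrable_rad_rpow [IsProbabilityMeasure P] {a b q : ℝ} (ha : a < 1) (hb : b < 1)
    (hq : 0 ≤ q) : IntervalIntegrable (fun t => rad P t x ^ q) volume a b := by
  refine MonotoneOn.intervalIntegrable fun t ht t' ht' htt' => ?_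
  have ht'1 : t' < 1 := ht'.2.trans_lt (max_lt ha hb)
  exact Real.rpow_le_rpow (rad_nonneg P t x) (rad_mono htt' ht'1) hq

lemma rad_le_rpow_of_min_le {κ c b : ℝ} (hc : 0 < c) (hb : b ≠ 0)
    (hP : ∀ r, 0 < r → min κ (c * r ^ b) ≤ (P (closedBall x r)).toReal)
    (ht : 0 < t) (htκ : t ≤ κ) : rad P t x ≤ (t / c) ^ b⁻¹ := by
  have htc : 0 < t / c := div_pos ht hc
  refine rad_le (Real.rpow_pos_of_pos htc _) ?_
  have hmin := hP ((t / c) ^ b⁻¹) (Real.rpow_pos_of_pos htc _)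
  rwa [Real.rpow_inv_rpow htc.le hb, mul_div_cancel₀ t hc.ne', min_eq_right htκ] at hmin

end Rad

/-- `dtmPow P m q x` is the `q`-th power `d_{P,m,q}(x)^q` of the distance to the measure. -/
noncomputable def dtmPow {d : ℕ} (P : Measure (EuclideanSpace ℝ (Fin d))) (m q : ℝ)
    (x : EuclideanSpace ℝ (Fin d)) : ℝ :=
  (1 / m) * ∫ t in (0:ℝ)..m, rad P t x ^ q

section Dtm

variable {d : ℕ} {P : Measure (EuclideanSpace ℝ (Fin d))} [IsProbabilityMeasure P]
  {x : EuclideanSpace ℝ (Fin d)} {m q : ℝ}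

theorem dtmPow_le_of_min_le {κ c b : ℝ} (hc : 0 < c) (hb : 0 < b) (hq : 0 ≤ q) (hm : 0 < m)
    (hmκ : m ≤ κ) (hm1 : m < 1)
    (hP : ∀ r, 0 < r → min κ (c * r ^ b) ≤ (P (closedBall x r)).toReal) :
    dtmPow P m q x ≤ b / (b + q) * (m / c) ^ (q / b) := by
  have hpt : ∀ t ∈ Ioo 0 m, rad P t x ^ q ≤ (t / c) ^ (q / b) := fun t ht => by
    rw [div_eq_inv_mul q b, Real.rpow_mul (div_pos ht.1 hc).le]
    exact Real.rpow_le_rpow (rad_nonneg P t x)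
      (rad_le_rpow_of_min_le hc hb.ne' hP ht.1 (ht.2.le.trans hmκ)) hq
  have hcont : Continuous fun t : ℝ => (t / c) ^ (q / b) :=
    (continuous_id.div_const c).rpow_const fun _ => Or.inr (by positivity)
  calc dtmPow P m q x ≤ 1 / m * ∫ t in (0:ℝ)..m, (t / c) ^ (q / b) := by
        rw [dtmPow]
        gcongr
        exact intervalIntegral.integral_mono_on_of_le_Ioo hm.le
          (intervalIntegrable_rad_rpow zero_lt_one hm1 hq) (hcont.intervalIntegrable _ _) hpt
    _ = b / (b + q) * (m / c) ^ (q / b) := by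
        rw [integral_div_rpow hm.le hc (by positivity)]
        field_simp
        ring

theorem le_dtmPow_of_measure_closedBall_le {ε η : ℝ} (hε : 0 ≤ ε) (hεm : ε ≤ m) (hm1 : m < 1)
    (hη : 0 ≤ η) (hq : 0 ≤ q)
    (hP : ∀ r, 0 < r → r < η → (P (closedBall x r)).toReal ≤ ε) :
    (m - ε) / m * η ^ q ≤ dtmPow P m q x := by
  have hε1 : ε < 1 := hεm.trans_lt hm1
  have hhead : 0 ≤ ∫ t in (0:ℝ)..ε, rad P t x ^ q :=
    intervalIntegral.integral_nonneg hε fun t _ => Real.rpow_nonneg (rad_nonneg P t x) q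
  have htail : (m - ε) * η ^ q ≤ ∫ t in ε..m, rad P t x ^ q := by
    calc (m - ε) * η ^ q = ∫ _ in ε..m, η ^ q := by simp
      _ ≤ ∫ t in ε..m, rad P t x ^ q :=
        intervalIntegral.integral_mono_on_of_le_Ioo hεm intervalIntegrable_const
          (intervalIntegrable_rad_rpow hε1 hm1 hq) fun t ht => Real.rpow_le_rpow hη
            (le_rad (ht.2.trans hm1) fun r hr hrη => (hP r hr hrη).trans_lt ht.1) hq
  have hm0 : 0 ≤ m := hε.trans hεm
  rw [dtmPow, ← intervalIntegral.integral_add_adjacent_intervals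
    (intervalIntegrable_rad_rpow zero_lt_one hε1 hq) (intervalIntegrable_rad_rpow hε1 hm1 hq)]
  calc (m - ε) / m * η ^ q = 1 / m * ((m - ε) * η ^ q) := by ring
    _ ≤ _ := by gcongr; linarith

end Dtm

theorem stmt12_general {d : ℕ} (P₀ P₁ : Measure (EuclideanSpace ℝ (Fin d)))
    [IsProbabilityMeasure P₀] [IsProbabilityMeasure P₁]
    (S₀ S₁ : Set (EuclideanSpace ℝ (Fin d)))
    (hS₀ : P₀ S₀ᶜ = 0) (hS₁ne : S₁.Nonempty)
    (ε η m q b h a : ℝ) (hε : ε ∈ Set.Ico (0:ℝ) 1) (hη : 0 < η)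
    (hsep : ∀ x' ∈ S₀, ∀ z ∈ S₁, η ≤ dist x' z)
    (hm : m ∈ Set.Ioo ε 1) (hmε : m ≤ 1 - ε) (hq : 1 ≤ q) (hb : 0 < b)
    (hpos : 0 < (m - ε) / m * η ^ q - h)
    (x : EuclideanSpace ℝ (Fin d))
    (hab : ∀ r : ℝ, 0 < r → min 1 (a * r ^ b) ≤ (P₀ (closedBall x r)).toReal)
    (ha : (m / (1 - ε)) *
        ((b + q) / b * ((m - ε) / m * η ^ q - h)) ^ (-(b / q)) < a) :
    (1 / m) * (∫ t in (0:ℝ)..m,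
        rad (ENNReal.ofReal (1 - ε) • P₀ + ENNReal.ofReal ε • P₁) t x ^ q) + h
      < sInf ((fun y => (1 / m) * ∫ t in (0:ℝ)..m,
          rad (ENNReal.ofReal (1 - ε) • P₀ + ENNReal.ofReal ε • P₁) t y ^ q) '' S₁) := by
  obtain ⟨hε0, hε1⟩ := hε
  obtain ⟨hεm, hm1⟩ := hm
  have hm0 : 0 < m := hε0.trans_lt hεm
  have h1ε : 0 < 1 - ε := by linarith
  have := isProbabilityMeasure_mixture P₀ P₁ hε0 hε1.le
  change dtmPow (mixture ε P₀ P₁) m q x + h < sInf (dtmPow (mixture ε P₀ P₁) m q '' S₁)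
  have ha0 : 0 < a := lt_of_le_of_lt (by positivity) ha
  have hupper : dtmPow (mixture ε P₀ P₁) m q x ≤ b / (b + q) * (m / (a * (1 - ε))) ^ (q / b) := by
    refine dtmPow_le_of_min_le (by positivity) hb (by linarith) hm0 hmε hm1 fun r hr => ?_
    calc min (1 - ε) (a * (1 - ε) * r ^ b) = (1 - ε) * min 1 (a * r ^ b) := by
          rw [mul_min_of_nonneg _ _ h1ε.le]; ring_nf
      _ ≤ (1 - ε) * (P₀ (closedBall x r)).toReal := by gcongr; exact hab r hr
      _ ≤ _ := mul_toReal_le_mixture_apply_toReal P₀ P₁ hε0 hε1.le _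
  have hgap : b / (b + q) * (m / (a * (1 - ε))) ^ (q / b) < (m - ε) / m * η ^ q - h :=
    mul_rpow_div_lt_of_mul_rpow_neg_lt hm0.le (by positivity) hpos hb (by linarith)
      (by rwa [div_mul_eq_mul_div, div_lt_iff₀ h1ε] at ha)
  have hlower : ∀ y ∈ S₁, (m - ε) / m * η ^ q ≤ dtmPow (mixture ε P₀ P₁) m q y := fun y hy =>
    le_dtmPow_of_measure_closedBall_le hε0 hεm.le hm1 hη.le (by linarith) fun r _ hrη =>
      mixture_apply_toReal_le_of_null P₀ P₁ hε0 hε1.le <| measure_mono_null (fun p hp hpS₀ =>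
        (hsep p hpS₀ y hy).not_gt ((mem_closedBall.1 hp).trans_lt hrη)) hS₀
  calc dtmPow (mixture ε P₀ P₁) m q x + h < (m - ε) / m * η ^ q := by linarith
    _ ≤ _ := le_csInf (hS₁ne.image _) (forall_mem_image.2 hlower)

theorem stmt12 {d : ℕ} (P₀ P₁ : Measure (EuclideanSpace ℝ (Fin d)))
    [IsProbabilityMeasure P₀] [IsProbabilityMeasure P₁]
    (S₀ S₁ : Set (EuclideanSpace ℝ (Fin d)))
    (hS₀ : P₀ S₀ᶜ = 0) (hS₁ : P₁ S₁ᶜ = 0) (hS₁ne : S₁.Nonempty)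
    (ε η m q b h a : ℝ) (hε : ε ∈ Set.Ico (0:ℝ) 1) (hη : 0 < η)
    (hsep : ∀ x' ∈ S₀, ∀ z ∈ S₁, η ≤ dist x' z)
    (hm : m ∈ Set.Ioo ε 1) (hmε : m ≤ 1 - ε) (hq : 1 ≤ q) (hb : 0 < b) (hh : 0 < h)
    (hpos : 0 < (m - ε) / m * η ^ q - h)
    (x : EuclideanSpace ℝ (Fin d)) (hx : x ∈ S₀)
    (hab : ∀ r : ℝ, 0 < r → min 1 (a * r ^ b) ≤ (P₀ (closedBall x r)).toReal)
    (ha : (m / (1 - ε)) *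
        ((b + q) / b * ((m - ε) / m * η ^ q - h)) ^ (-(b / q)) < a) :
    (1 / m) * (∫ t in (0:ℝ)..m,
        rad (ENNReal.ofReal (1 - ε) • P₀ + ENNReal.ofReal ε • P₁) t x ^ q) + h
      < sInf ((fun y => (1 / m) * ∫ t in (0:ℝ)..m,
          rad (ENNReal.ofReal (1 - ε) • P₀ + ENNReal.ofReal ε • P₁) t y ^ q) '' S₁) :=
  stmt12_general P₀ P₁ S₀ S₁ hS₀ hS₁ne ε η m q b h a hε hη hsep hm hmε hq hb hpos x hab ha
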